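/- arXiv:1705.03414 — 2 statements merged into one kernel-verified Lean document; each statement's English description precedes it below -/
import Mathlib

section
/- Let w : Fin m → ℝ be positive weights with normalization P_j = w_j / ∑_k w_k, let 0 ≤ μ ≤ 1, 1/2 ≤ β < 1, δ = ln(β/(1-β)), and R : Fin m → {0,1}. Define w'_j = (1-β)·((1-μ)·w_j + (μ/m)·∑_k w_k)·e^{δ·R_j}. Then ∑_j w'_j ≤ (1-β)·(1 + μ(e^δ - 1))·(∑_j w_j)·e^{δ'·∑_j P_j R_j}, where δ' = (1-μ)(e^δ-1)/(1+μδ). -/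
open Finset Real

set_option maxHeartbeats 1000000

theorem potential_one_step_upper (m : ℕ) (hm : 0 < m)
    (w w' R : Fin m → ℝ) (μ β δ δ' : ℝ)
    (hw : ∀ j, 0 < w j)
    (hμ0 : 0 ≤ μ) (hμ1 : μ ≤ 1)
    (hβ : 1/2 ≤ β) (hβ1 : β < 1)
    (hδ : δ = Real.log (β / (1 - β)))
    (hR : ∀ j, R j = 0 ∨ R j = 1)
    (hupd : ∀ j, w' j =
      (1 - β) * ((1 - μ) * w j + (μ / m) * ∑ k, w k) * Real.exp (δ * R j))
    (hδ' : δ' = (1 - μ) * (Real.exp δ - 1) / (1 + μ * δ)) :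
    ∑ j, w' j ≤
      (1 - β) * (1 + μ * (Real.exp δ - 1)) * (∑ j, w j) *
        Real.exp (δ' * ∑ j, (w j / ∑ k, w k) * R j) := by
  set S : ℝ := ∑ k, w k with hSdef
  set E : ℝ := Real.exp δ with hEdef
  set A : ℝ := ∑ j, w j * R j with hAdef
  set B : ℝ := ∑ j, R j with hBdef
  have hS : 0 < S := Finset.sum_pos (fun j _ => hw j) ⟨⟨0, hm⟩, Finset.mem_univ _⟩
  have hβpos : 0 < 1 - β := by linarith
  have hδ0 : 0 ≤ δ := by
    rw [hδ]
    apply Real.log_nonneg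
    rw [le_div_iff₀ hβpos]; linarith
  have hE1 : 1 ≤ E := Real.one_le_exp hδ0
  have hEδ : δ + 1 ≤ E := Real.add_one_le_exp δ
  have hA0 : 0 ≤ A := Finset.sum_nonneg fun j _ => by
    rcases hR j with h | h <;> simp [h]
    exact (hw j).le
  have hAS : A ≤ S := Finset.sum_le_sum fun j _ => by
    rcases hR j with h | h <;> simp [h]
    exact (hw j).le
  have hB0 : 0 ≤ B := Finset.sum_nonneg fun j _ => by rcases hR j with h | h <;> simp [h]
  have hBm : B ≤ m := by
    calc B ≤ ∑ _j : Fin m, (1 : ℝ) := Finset.sum_le_sum fun j _ => by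
            rcases hR j with h | h <;> simp [h]
      _ = m := by simp
  have hden : 0 < 1 + μ * δ := by positivity
  have hδ'0 : 0 ≤ δ' := by
    rw [hδ']
    apply div_nonneg _ hden.le
    apply mul_nonneg (by linarith) (by linarith)
  have hmR : (0 : ℝ) < m := by exact_mod_cast hm
  have hexp : ∀ j, Real.exp (δ * R j) = 1 + (E - 1) * R j := by
    intro j
    rcases hR j with h | h <;> simp [h, hEdef]
  have hsum : ∑ j, w' j
      = (1 - β) * ((1 - μ) * S + (μ / m) * S * m + (E - 1) * ((1 - μ) * A + (μ / m) * S * B)) := by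
    have hterm : ∀ j, w' j = (1 - β) * (1 - μ) * w j + (1 - β) * ((μ / m) * S)
        + (1 - β) * (E - 1) * (1 - μ) * (w j * R j)
        + (1 - β) * (E - 1) * ((μ / m) * S) * R j := fun j => by
      rw [hupd j, hexp j]; ring
    simp only [hterm, Finset.sum_add_distrib, ← Finset.mul_sum, Finset.sum_const,
      Finset.card_univ, Fintype.card_fin, nsmul_eq_mul, ← hAdef, ← hBdef, ← hSdef]
    ring
  have hμm : (μ / m) * S * m = μ * S := by field_simp
  rw [hsum, hμm]
  have hy : ∑ j, (w j / S) * R j = A / S := by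
    rw [hAdef, Finset.sum_div]
    exact Finset.sum_congr rfl fun j _ => by rw [div_mul_eq_mul_div]
  rw [hy]
  have h1 : (E - 1) * ((μ / m) * S * B) ≤ (E - 1) * (μ * S) := by
    apply mul_le_mul_of_nonneg_left _ (by linarith)
    rw [div_mul_eq_mul_div, div_mul_eq_mul_div, div_le_iff₀ hmR]
    nlinarith [mul_le_mul_of_nonneg_left hBm (mul_nonneg hμ0 hS.le)]
  have h2 : (E - 1) * ((1 - μ) * A) ≤ (1 + μ * (E - 1)) * (δ' * A) := by
    rw [hδ', show (1 + μ * (E - 1)) * ((1 - μ) * (E - 1) / (1 + μ * δ) * A)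
      = ((1 + μ * (E - 1)) * ((1 - μ) * (E - 1) * A)) / (1 + μ * δ) by ring,
      le_div_iff₀ hden]
    have hid : (1 + μ * (E - 1)) * ((1 - μ) * (E - 1) * A)
        - (E - 1) * ((1 - μ) * A) * (1 + μ * δ)
        = μ * (1 - μ) * (E - 1) * (E - 1 - δ) * A := by ring
    have hpos : 0 ≤ μ * (1 - μ) * (E - 1) * (E - 1 - δ) * A :=
      mul_nonneg (mul_nonneg (mul_nonneg (mul_nonneg hμ0 (by linarith))
        (by linarith)) (by linarith)) hA0
    linarith
  have key : (1 - μ) * S + μ * S + (E - 1) * ((1 - μ) * A + (μ / m) * S * B)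
      ≤ (1 + μ * (E - 1)) * (S + δ' * A) := by nlinarith [h1, h2]
  have hSA : S + δ' * A = S * (1 + δ' * (A / S)) := by field_simp
  have hc : 0 ≤ (1 - β) * (1 + μ * (E - 1)) * S :=
    mul_nonneg (mul_nonneg hβpos.le (by nlinarith)) hS.le
  calc (1 - β) * ((1 - μ) * S + μ * S + (E - 1) * ((1 - μ) * A + (μ / m) * S * B))
      ≤ (1 - β) * ((1 + μ * (E - 1)) * (S + δ' * A)) :=
        mul_le_mul_of_nonneg_left key hβpos.le
    _ = (1 - β) * (1 + μ * (E - 1)) * S * (1 + δ' * (A / S)) := by rw [hSA]; ring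
    _ ≤ (1 - β) * (1 + μ * (E - 1)) * S * Real.exp (δ' * (A / S)) := by
        apply mul_le_mul_of_nonneg_left _ hc
        have := Real.add_one_le_exp (δ' * (A / S))
        linarith
end

section
/- Fix m ≥ 2, qualities 1 ≥ η_1 > η_2 ≥ … ≥ η_m ≥ 0, parameters 1/2 < β ≤ e/(e+1), δ := ln(β/(1-β)) ∈ (0,1], and 0 ≤ 6μ ≤ δ². Let R_j^t be independent Bernoulli(η_j) random variables, W_j^0 = 1, W_j^{t+1} = ((1-μ)W_j^t + (μ/m)∑_k W_k^t)·β^{R_j^{t+1}}(1-β)^{1-R_j^{t+1}}, and P_j^t = W_j^t/∑_k W_k^t. Then for every T ≥ (ln m)/δ², the regret satisfies η_1 - (1/T)·∑_{t=1}^T ∑_{j=1}^m E[P_j^{t-1} R_j^t] ≤ ln m/(δT) + 2δ ≤ 3δ. -/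
/-! The weights follow the fixed-share variant of multiplicative weights. With the gains
`g_t(k) = β^(R_k^t) (1-β)^(1-R_k^t)` and the mixed distribution `q_t = (1 - μ) P^t + μ / m`,
the total weight satisfies `S_{t+1} = S_t · ∑_k q_t(k) g_{t+1}(k)`,
while a single expert `j` keeps at least the fraction `1 - μ` of its weight in each mixing step.
Comparing `log W_T(j) ≤ log S_T` bounds, along every sample path, `δ` times the gap between the
reward of `j` and that of the learner by `log m + T (δ² + 4μ) ≤ log m + 2 δ² T`; the ingredients are
`β^r (1-β)^(1-r) = (1-β) e^(δ r)`, convexity `e^(δ r) ≤ 1 + (e^δ - 1) r` on `[0, 1]`,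
`log x ≤ x - 1` and `e^δ - 1 ≤ δ + δ²`. Taking expectations and `E[R_1^t] = η_1` gives the
regret bound after division by `δ T`. -/

open MeasureTheory Finset ProbabilityTheory

namespace Real

lemma exp_mul_le_one_add_mul {r : ℝ} (hr0 : 0 ≤ r) (hr1 : r ≤ 1) (δ : ℝ) :
    exp (δ * r) ≤ 1 + (exp δ - 1) * r := by
  have h := convexOn_exp.2 (Set.mem_univ δ) (Set.mem_univ 0) hr0 (sub_nonneg.2 hr1) (by ring)
  simp only [smul_eq_mul, mul_zero, add_zero, exp_zero] at h
  rw [mul_comm δ]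
  linarith

lemma exp_sub_one_le_add_sq {δ : ℝ} (hδ : |δ| ≤ 1) : exp δ - 1 ≤ δ + δ ^ 2 := by
  linarith [(abs_le.1 (abs_exp_sub_one_sub_id_le hδ)).2]

lemma neg_log_one_sub_le {μ : ℝ} (hμ0 : 0 ≤ μ) (hμ : μ ≤ 1 / 2) : -log (1 - μ) ≤ 2 * μ := by
  have h1μ : 0 < 1 - μ := by linarith
  have hinv : (1 - μ)⁻¹ ≤ 1 + 2 * μ := by
    rw [inv_le_iff_one_le_mul₀ h1μ]
    nlinarith
  linarith [one_sub_inv_le_log_of_pos h1μ]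

lemma log_sum_mul_exp_le {ι : Type*} [Fintype ι] {q r : ι → ℝ} (hq : ∀ k, 0 ≤ q k)
    (hq1 : ∑ k, q k = 1) (hr0 : ∀ k, 0 ≤ r k) (hr1 : ∀ k, r k ≤ 1) (δ : ℝ) :
    log (∑ k, q k * exp (δ * r k)) ≤ (exp δ - 1) * ∑ k, q k * r k := by
  obtain ⟨k, -, hk⟩ := exists_ne_zero_of_sum_ne_zero (hq1 ▸ one_ne_zero : ∑ k, q k ≠ 0)
  have hpos : 0 < ∑ k, q k * exp (δ * r k) :=
    sum_pos' (fun i _ => mul_nonneg (hq i) (exp_pos _).le)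
      ⟨k, mem_univ k, mul_pos ((hq k).lt_of_ne' hk) (exp_pos _)⟩
  calc log (∑ k, q k * exp (δ * r k))
      ≤ ∑ k, q k * exp (δ * r k) - 1 := log_le_sub_one_of_pos hpos
    _ ≤ ∑ k, q k * (1 + (exp δ - 1) * r k) - 1 := by
      gcongr with k
      exacts [hq k, exp_mul_le_one_add_mul (hr0 k) (hr1 k) δ]
    _ = (exp δ - 1) * ∑ k, q k * r k := by
      simp only [mul_add, mul_one, sum_add_distrib, hq1, mul_sum, mul_left_comm (q _)]
      ring

lemma log_div_one_sub_pos {β : ℝ} (hβ : 1 / 2 < β) (hβ1 : β < 1) : 0 < log (β / (1 - β)) :=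
  log_pos ((one_lt_div (by linarith)).2 (by linarith))

lemma log_div_one_sub_le_one {β : ℝ} (hβ : 1 / 2 < β) (hβ' : β ≤ exp 1 / (exp 1 + 1)) :
    log (β / (1 - β)) ≤ 1 := by
  have h := (le_div_iff₀ (by positivity : 0 < exp 1 + 1)).1 hβ'
  have h1β : 0 < 1 - β := by nlinarith [exp_pos 1]
  rw [log_le_iff_le_exp (by positivity), div_le_iff₀ h1β]
  linarith

lemma rpow_mul_one_sub_rpow {β : ℝ} (hβ0 : 0 < β) (hβ1 : β < 1) (r : ℝ) :
    β ^ r * (1 - β) ^ (1 - r) = (1 - β) * exp (log (β / (1 - β)) * r) := by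
  have h1β : 0 < 1 - β := by linarith
  calc β ^ r * (1 - β) ^ (1 - r) = exp (log β * r + log (1 - β) * (1 - r)) := by
        rw [rpow_def_of_pos hβ0, rpow_def_of_pos h1β, exp_add]
    _ = exp (log (1 - β)) * exp ((log β - log (1 - β)) * r) := by
        rw [← exp_add]
        ring_nf
    _ = (1 - β) * exp (log (β / (1 - β)) * r) := by rw [exp_log h1β, log_div hβ0.ne' h1β.ne']

end Real

lemma sub_one_div_mul_le_of_mul_sub_le {a B L δ T : ℝ} (hδ : 0 < δ) (hT : 0 < T)
    (hL : L / δ ^ 2 ≤ T) (h : δ * (T * a - B) ≤ L + 2 * δ ^ 2 * T) :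
    a - 1 / T * B ≤ L / (δ * T) + 2 * δ ∧ a - 1 / T * B ≤ 3 * δ := by
  have hbound : a - 1 / T * B ≤ L / (δ * T) + 2 * δ := by
    rw [show L / (δ * T) + 2 * δ = (L + 2 * δ ^ 2 * T) / (δ * T) by field_simp,
      le_div_iff₀ (by positivity)]
    calc (a - 1 / T * B) * (δ * T) = δ * (T * a - B) := by field_simp
      _ ≤ _ := h
  have hLδ : L / (δ * T) ≤ δ := by
    rw [div_le_iff₀ (by positivity)] at hL ⊢
    nlinarith
  exact ⟨hbound, by linarith⟩

lemma integral_eq_of_eq_zero_or_eq_one {Ω : Type*} [MeasurableSpace Ω] {Pr : Measure Ω}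
    {X : Ω → ℝ} (hX : Measurable X) (hval : ∀ ω, X ω = 0 ∨ X ω = 1) {p : ℝ} (hp : 0 ≤ p)
    (hX1 : Pr {ω | X ω = 1} = ENNReal.ofReal p) : ∫ ω, X ω ∂Pr = p := by
  have hind : X = Set.indicator {ω | X ω = 1} 1 := by
    funext ω
    rcases hval ω with h | h <;> simp [h]
  have hmeas : MeasurableSet {ω | X ω = 1} := hX (measurableSet_singleton 1)
  rw [hind, integral_indicator_one hmeas, measureReal_def, hX1,
    ENNReal.toReal_ofReal hp]

section FixedShare

variable {ι : Type*} [Fintype ι]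

noncomputable def fixedShareMix (μ : ℝ) (v : ι → ℝ) (k : ι) : ℝ :=
  (1 - μ) * (v k / ∑ i, v i) + μ / Fintype.card ι

lemma fixedShareMix_nonneg {μ : ℝ} (hμ0 : 0 ≤ μ) (hμ1 : μ ≤ 1) {v : ι → ℝ} (hv : ∀ i, 0 ≤ v i)
    (k : ι) : 0 ≤ fixedShareMix μ v k := by
  have := sum_nonneg fun i (_ : i ∈ univ) => hv i
  have := hv k
  unfold fixedShareMix
  have : 0 ≤ 1 - μ := by linarith
  positivity

lemma sum_fixedShareMix [Nonempty ι] (μ : ℝ) {v : ι → ℝ} (hv : ∑ i, v i ≠ 0) :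
    ∑ k, fixedShareMix μ v k = 1 := by
  simp only [fixedShareMix, sum_add_distrib, ← mul_sum, ← sum_div, div_self hv, sum_const,
    card_univ, nsmul_eq_mul]
  field_simp
  ring

lemma sum_fixedShareMix_mul_le [Nonempty ι] {μ : ℝ} (hμ0 : 0 ≤ μ) {v r : ι → ℝ}
    (hv : ∀ i, 0 ≤ v i) (hr0 : ∀ k, 0 ≤ r k) (hr1 : ∀ k, r k ≤ 1) :
    ∑ k, fixedShareMix μ v k * r k ≤ ∑ k, v k / (∑ i, v i) * r k + μ := by
  have hS := sum_nonneg fun i (_ : i ∈ univ) => hv i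
  have hx : 0 ≤ ∑ k, v k / (∑ i, v i) * r k :=
    sum_nonneg fun k _ => mul_nonneg (div_nonneg (hv k) hS) (hr0 k)
  have hr : ∑ k, r k ≤ Fintype.card ι := by
    simpa using sum_le_sum fun k (_ : k ∈ univ) => hr1 k
  calc ∑ k, fixedShareMix μ v k * r k
      = (1 - μ) * ∑ k, v k / (∑ i, v i) * r k + μ / Fintype.card ι * ∑ k, r k := by
        simp only [fixedShareMix, add_mul, sum_add_distrib, mul_sum, mul_assoc]
    _ ≤ ∑ k, v k / (∑ i, v i) * r k + μ / Fintype.card ι * Fintype.card ι := by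
        gcongr
        nlinarith
    _ = ∑ k, v k / (∑ i, v i) * r k + μ := by field_simp

structure IsFixedShare (μ : ℝ) (g w : ℕ → ι → ℝ) : Prop where
  zero : ∀ j, w 0 j = 1
  succ : ∀ t j, w (t + 1) j = ((1 - μ) * w t j + μ / Fintype.card ι * ∑ k, w t k) * g (t + 1) j

namespace IsFixedShare

lemma measurable {Ω : Type*} [MeasurableSpace Ω] {μ : ℝ} {G W : ℕ → ι → Ω → ℝ}
    (hW : ∀ ω, IsFixedShare μ (fun t j => G t j ω) (fun t j => W t j ω))
    (hG : ∀ t j, Measurable (G t j)) (t : ℕ) (j : ι) : Measurable (W t j) := by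
  induction t generalizing j with
  | zero =>
    have : W 0 j = fun _ => 1 := funext fun ω => (hW ω).zero j
    rw [this]
    exact measurable_const
  | succ t ih =>
    have : W (t + 1) j = fun ω =>
        ((1 - μ) * W t j ω + μ / Fintype.card ι * ∑ k, W t k ω) * G (t + 1) j ω :=
      funext fun ω => (hW ω).succ t j
    rw [this]
    have := hG (t + 1) j
    fun_prop

variable [Nonempty ι] {μ : ℝ} {g w : ℕ → ι → ℝ}

lemma pos (hw : IsFixedShare μ g w) (hμ0 : 0 ≤ μ) (hμ1 : μ < 1) (hg : ∀ t j, 0 < g t j) :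
    ∀ t j, 0 < w t j := by
  intro t
  induction t with
  | zero => simp [hw.zero]
  | succ t ih =>
    intro j
    have := sum_nonneg fun k (_ : k ∈ univ) => (ih k).le
    have := ih j
    have := hg (t + 1) j
    have : 0 < 1 - μ := by linarith
    rw [hw.succ]
    positivity

lemma sum_succ (hw : IsFixedShare μ g w) {t : ℕ} (hS : ∑ k, w t k ≠ 0) :
    ∑ k, w (t + 1) k = (∑ k, w t k) * ∑ k, fixedShareMix μ (w t) k * g (t + 1) k := by
  rw [mul_sum]
  refine sum_congr rfl fun k _ => ?_
  rw [hw.succ, fixedShareMix]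
  field_simp

lemma log_sum_eq (hw : IsFixedShare μ g w) (hS : ∀ t, 0 < ∑ k, w t k) (T : ℕ) :
    Real.log (∑ k, w T k) = Real.log (Fintype.card ι) +
      ∑ t ∈ range T, Real.log (∑ k, fixedShareMix μ (w t) k * g (t + 1) k) := by
  induction T with
  | zero => simp [hw.zero]
  | succ T ih =>
    have hfac : 0 < ∑ k, fixedShareMix μ (w T) k * g (T + 1) k := by
      have h := hS (T + 1)
      rw [hw.sum_succ (hS T).ne'] at h
      exact pos_of_mul_pos_right h (hS T).le
    rw [hw.sum_succ (hS T).ne', Real.log_mul (hS T).ne' hfac.ne', ih, sum_range_succ]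
    ring

lemma add_sum_log_le_log (hw : IsFixedShare μ g w) (hμ0 : 0 ≤ μ) (hμ1 : μ < 1)
    (hg : ∀ t j, 0 < g t j) (j : ι) (T : ℕ) :
    T * Real.log (1 - μ) + ∑ t ∈ range T, Real.log (g (t + 1) j) ≤ Real.log (w T j) := by
  induction T with
  | zero => simp [hw.zero]
  | succ T ih =>
    have hwpos := hw.pos hμ0 hμ1 hg
    have hstep : (1 - μ) * w T j * g (T + 1) j ≤ w (T + 1) j := by
      rw [hw.succ]
      have := sum_nonneg fun k (_ : k ∈ univ) => (hwpos T k).le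
      have := hg (T + 1) j
      gcongr
      exact le_add_of_nonneg_right (by positivity)
    have h1μ : 0 < 1 - μ := by linarith
    have hlog := Real.log_le_log (by have := hwpos T j; have := hg (T + 1) j; positivity) hstep
    rw [Real.log_mul (by have := hwpos T j; positivity) (hg _ j).ne',
      Real.log_mul h1μ.ne' (hwpos T j).ne'] at hlog
    rw [sum_range_succ]
    push_cast
    linarith

lemma sum_log_le (hw : IsFixedShare μ g w) (hμ0 : 0 ≤ μ) (hμ1 : μ < 1)
    (hg : ∀ t j, 0 < g t j) (j : ι) (T : ℕ) :
    ∑ t ∈ range T, Real.log (g (t + 1) j) ≤ Real.log (Fintype.card ι) - T * Real.log (1 - μ) +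
      ∑ t ∈ range T, Real.log (∑ k, fixedShareMix μ (w t) k * g (t + 1) k) := by
  have hwpos := hw.pos hμ0 hμ1 hg
  have hS : ∀ t, 0 < ∑ k, w t k := fun t =>
    sum_pos (fun k _ => hwpos t k) univ_nonempty
  have hle : Real.log (w T j) ≤ Real.log (∑ k, w T k) :=
    Real.log_le_log (hwpos T j) (single_le_sum (fun k _ => (hwpos T k).le) (mem_univ j))
  linarith [hw.add_sum_log_le_log hμ0 hμ1 hg j T, hw.log_sum_eq hS T]

end IsFixedShare

end FixedShare

section ExponentialGains

open Real

variable {ι : Type*} [Fintype ι] [Nonempty ι]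

lemma log_sum_fixedShareMix_mul_exp_le {μ δ c : ℝ} (hμ0 : 0 ≤ μ) (hμ1 : μ ≤ 1) (hδ0 : 0 ≤ δ)
    (hδ1 : δ ≤ 1) (hc : 0 < c) {v r : ι → ℝ} (hv : ∀ i, 0 ≤ v i) (hS : ∑ i, v i ≠ 0)
    (hr0 : ∀ k, 0 ≤ r k) (hr1 : ∀ k, r k ≤ 1) :
    log (∑ k, fixedShareMix μ v k * (c * exp (δ * r k))) ≤
      log c + δ * ∑ k, v k / (∑ i, v i) * r k + δ ^ 2 + 2 * μ := by
  set x := ∑ k, v k / (∑ i, v i) * r k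
  have hmix0 := fixedShareMix_nonneg hμ0 hμ1 hv
  have hmix1 := sum_fixedShareMix μ hS
  have hx0 : 0 ≤ x := by
    have := sum_nonneg fun i (_ : i ∈ univ) => hv i
    exact sum_nonneg fun k _ => mul_nonneg (div_nonneg (hv k) this) (hr0 k)
  have hx1 : x ≤ 1 := by
    have := sum_nonneg fun i (_ : i ∈ univ) => hv i
    calc x ≤ ∑ k, v k / (∑ i, v i) :=
          sum_le_sum fun k _ => mul_le_of_le_one_right (div_nonneg (hv k) this) (hr1 k)
      _ = 1 := by rw [← sum_div, div_self hS]
  have hpos : 0 < ∑ k, fixedShareMix μ v k * exp (δ * r k) := by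
    calc (0 : ℝ) < ∑ k, fixedShareMix μ v k := by rw [hmix1]; exact one_pos
      _ ≤ ∑ k, fixedShareMix μ v k * exp (δ * r k) := sum_le_sum fun k _ =>
        le_mul_of_one_le_right (hmix0 k) (one_le_exp (mul_nonneg hδ0 (hr0 k)))
  have hexp := exp_sub_one_le_add_sq (abs_le.2 ⟨by linarith, hδ1⟩)
  have hexp0 : 0 ≤ exp δ - 1 := by linarith [add_one_le_exp δ]
  have hfactor : ∑ k, fixedShareMix μ v k * (c * exp (δ * r k)) =
      c * ∑ k, fixedShareMix μ v k * exp (δ * r k) := by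
    rw [mul_sum]
    exact sum_congr rfl fun k _ => mul_left_comm _ _ _
  rw [hfactor, log_mul hc.ne' hpos.ne']
  calc log c + log (∑ k, fixedShareMix μ v k * exp (δ * r k))
      ≤ log c + (exp δ - 1) * ∑ k, fixedShareMix μ v k * r k := by
        gcongr
        exact log_sum_mul_exp_le hmix0 hmix1 hr0 hr1 δ
    _ ≤ log c + (exp δ - 1) * (x + μ) := by
        gcongr
        exact sum_fixedShareMix_mul_le hμ0 hv hr0 hr1
    _ ≤ log c + δ * x + δ ^ 2 + 2 * μ := by
        have h2 : δ + δ ^ 2 ≤ 2 := by nlinarith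
        nlinarith [mul_le_mul_of_nonneg_right hexp hx0,
          mul_le_mul_of_nonneg_right (hexp.trans h2) hμ0, mul_le_of_le_one_right (sq_nonneg δ) hx1]

theorem IsFixedShare.regret_le {μ δ c : ℝ} {r w : ℕ → ι → ℝ}
    (hw : IsFixedShare μ (fun t j => c * exp (δ * r t j)) w) (hc : 0 < c) (hμ0 : 0 ≤ μ)
    (hμ : 6 * μ ≤ δ ^ 2) (hδ0 : 0 ≤ δ) (hδ1 : δ ≤ 1) (hr0 : ∀ t k, 0 ≤ r t k)
    (hr1 : ∀ t k, r t k ≤ 1) (j : ι) (T : ℕ) :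
    δ * (∑ t ∈ range T, r (t + 1) j -
        ∑ t ∈ range T, ∑ k, w t k / (∑ i, w t i) * r (t + 1) k) ≤
      log (Fintype.card ι) + 2 * δ ^ 2 * T := by
  have hμ1 : μ ≤ 1 / 6 := by nlinarith
  have hg : ∀ t j, 0 < c * exp (δ * r t j) := fun t j => by positivity
  have hwpos := hw.pos hμ0 (by linarith) hg
  have hS : ∀ t, 0 < ∑ k, w t k := fun t => sum_pos (fun k _ => hwpos t k) univ_nonempty
  have hkey := hw.sum_log_le hμ0 (by linarith) hg j T
  have hgain : ∑ t ∈ range T, log (c * exp (δ * r (t + 1) j)) =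
      T * log c + δ * ∑ t ∈ range T, r (t + 1) j := by
    simp only [log_mul hc.ne' (exp_pos _).ne', log_exp, sum_add_distrib, mul_sum, sum_const,
      card_range, nsmul_eq_mul]
  have hrounds := sum_le_sum fun t (_ : t ∈ range T) =>
    log_sum_fixedShareMix_mul_exp_le hμ0 (by linarith) hδ0 hδ1 hc (fun i => (hwpos t i).le)
      (hS t).ne' (hr0 (t + 1)) (hr1 (t + 1))
  simp only [sum_add_distrib, ← mul_sum, sum_const, card_range, nsmul_eq_mul] at hrounds
  have hshare : -(T * log (1 - μ)) ≤ T * (2 * μ) := by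
    rw [← mul_neg]
    exact mul_le_mul_of_nonneg_left (neg_log_one_sub_le hμ0 (by linarith)) T.cast_nonneg
  have hμT : 6 * μ * T ≤ δ ^ 2 * T := mul_le_mul_of_nonneg_right hμ T.cast_nonneg
  rw [mul_sub]
  linarith [mul_nonneg (sq_nonneg δ) T.cast_nonneg]

end ExponentialGains

section Expectation

open Real

variable {ι : Type*} [Fintype ι] [Nonempty ι] {Ω : Type*} [MeasurableSpace Ω]

theorem IsFixedShare.integral_regret_le {Pr : Measure Ω} [IsProbabilityMeasure Pr]
    {μ δ c : ℝ} {R W : ℕ → ι → Ω → ℝ}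
    (hW : ∀ ω, IsFixedShare μ (fun t j => c * exp (δ * R t j ω)) (fun t j => W t j ω))
    (hRmeas : ∀ t j, Measurable (R t j)) (hR0 : ∀ t k ω, 0 ≤ R t k ω)
    (hR1 : ∀ t k ω, R t k ω ≤ 1) (hc : 0 < c) (hμ0 : 0 ≤ μ) (hμ : 6 * μ ≤ δ ^ 2)
    (hδ0 : 0 ≤ δ) (hδ1 : δ ≤ 1) (j : ι) (T : ℕ) :
    δ * (∑ t ∈ range T, ∫ ω, R (t + 1) j ω ∂Pr -
        ∑ t ∈ range T, ∑ k, ∫ ω, W t k ω / (∑ i, W t i ω) * R (t + 1) k ω ∂Pr) ≤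
      log (Fintype.card ι) + 2 * δ ^ 2 * T := by
  have hWmeas := IsFixedShare.measurable hW (fun t j => by have := hRmeas t j; fun_prop)
  have hWpos : ∀ ω t k, 0 < W t k ω := fun ω =>
    (hW ω).pos hμ0 (by nlinarith) fun t j => by positivity
  have hRint : ∀ t k, Integrable (R t k) Pr := fun t k =>
    .of_bound (hRmeas t k).aestronglyMeasurable 1 (ae_of_all _ fun ω => by
      rw [Real.norm_of_nonneg (hR0 t k ω)]; exact hR1 t k ω)
  have hPRint : ∀ t k, Integrable (fun ω => W t k ω / (∑ i, W t i ω) * R (t + 1) k ω) Pr := by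
    intro t k
    refine .of_bound (C := 1) ?_ (ae_of_all _ fun ω => ?_)
    · have := hRmeas (t + 1) k
      have := hWmeas t
      fun_prop
    have hS := sum_nonneg fun i (_ : i ∈ univ) => (hWpos ω t i).le
    have hP1 : W t k ω / ∑ i, W t i ω ≤ 1 :=
      div_le_one_of_le₀ (single_le_sum (fun i _ => (hWpos ω t i).le) (mem_univ k)) hS
    rw [Real.norm_of_nonneg (mul_nonneg (div_nonneg (hWpos ω t k).le hS) (hR0 _ k ω))]
    exact mul_le_one₀ hP1 (hR0 _ k ω) (hR1 _ k ω)
  have hregret : Integrable (fun ω => ∑ t ∈ range T, R (t + 1) j ω -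
      ∑ t ∈ range T, ∑ k, W t k ω / (∑ i, W t i ω) * R (t + 1) k ω) Pr :=
    (integrable_finsetSum _ fun t _ => hRint _ j).sub
      (integrable_finsetSum _ fun t _ => integrable_finsetSum _ fun k _ => hPRint t k)
  calc δ * (∑ t ∈ range T, ∫ ω, R (t + 1) j ω ∂Pr -
        ∑ t ∈ range T, ∑ k, ∫ ω, W t k ω / (∑ i, W t i ω) * R (t + 1) k ω ∂Pr)
      = ∫ ω, δ * (∑ t ∈ range T, R (t + 1) j ω -
          ∑ t ∈ range T, ∑ k, W t k ω / (∑ i, W t i ω) * R (t + 1) k ω) ∂Pr := by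
        rw [integral_const_mul, integral_sub (integrable_finsetSum _ fun t _ => hRint _ j)
            (integrable_finsetSum _ fun t _ => integrable_finsetSum _ fun k _ => hPRint t k),
          integral_finsetSum _ fun t _ => hRint _ j,
          integral_finsetSum _ fun t _ => integrable_finsetSum _ fun k _ => hPRint t k]
        simp only [integral_finsetSum _ fun k _ => hPRint _ k]
    _ ≤ ∫ _, log (Fintype.card ι) + 2 * δ ^ 2 * T ∂Pr :=
        integral_mono (hregret.const_mul δ) (integrable_const _) fun ω =>
          (hW ω).regret_le hc hμ0 hμ hδ0 hδ1 (hR0 · · ω) (hR1 · · ω) j T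
    _ = log (Fintype.card ι) + 2 * δ ^ 2 * T := by simp

end Expectation

theorem infinite_population_regret
    {Ω : Type*} [MeasurableSpace Ω] (Pr : Measure Ω) [IsProbabilityMeasure Pr]
    (m : ℕ) (hm : 2 ≤ m)
    (η : Fin m → ℝ) (hη0 : ∀ j, 0 ≤ η j)
    (β μ δ : ℝ) (hβ : 1/2 < β) (hβ' : β ≤ Real.exp 1 / (Real.exp 1 + 1))
    (hδ : δ = Real.log (β / (1 - β))) (hμ0 : 0 ≤ μ) (hμ : 6 * μ ≤ δ ^ 2)
    (R : ℕ × Fin m → Ω → ℝ)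
    (hRmeas : ∀ p, Measurable (R p))
    (hRval : ∀ p ω, R p ω = 0 ∨ R p ω = 1)
    (hRbern : ∀ p, Pr {ω | R p ω = 1} = ENNReal.ofReal (η p.2))
    (W : ℕ → Fin m → Ω → ℝ)
    (hW0 : ∀ j ω, W 0 j ω = 1)
    (hupd : ∀ t j ω, W (t + 1) j ω =
      ((1 - μ) * W t j ω + (μ / m) * ∑ k, W t k ω) *
        Real.rpow β (R (t + 1, j) ω) * Real.rpow (1 - β) (1 - R (t + 1, j) ω))
    (P : ℕ → Fin m → Ω → ℝ)
    (hP : ∀ t j ω, P t j ω = W t j ω / ∑ k, W t k ω)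
    (T : ℕ) (hT : Real.log m / δ ^ 2 ≤ T) :
    η ⟨0, by omega⟩ - (1 / T) * ∑ t ∈ Finset.Icc 1 T, ∑ j,
        ∫ ω, P (t - 1) j ω * R (t, j) ω ∂Pr
      ≤ Real.log m / (δ * T) + 2 * δ ∧
    η ⟨0, by omega⟩ - (1 / T) * ∑ t ∈ Finset.Icc 1 T, ∑ j,
        ∫ ω, P (t - 1) j ω * R (t, j) ω ∂Pr
      ≤ 3 * δ := by
  have hβ1 : β < 1 :=
    hβ'.trans_lt ((div_lt_one (by positivity)).2 (lt_add_one _))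
  have hδ0 : 0 < δ := hδ ▸ Real.log_div_one_sub_pos hβ hβ1
  have hδ1 : δ ≤ 1 := hδ ▸ Real.log_div_one_sub_le_one hβ hβ'
  have hR : ∀ p ω, 0 ≤ R p ω ∧ R p ω ≤ 1 := fun p ω => by
    rcases hRval p ω with h | h <;> simp [h]
  have hfs : ∀ ω, IsFixedShare μ (fun t j => (1 - β) * Real.exp (δ * R (t, j) ω))
      (fun t j => W t j ω) := fun ω =>
    ⟨fun j => hW0 j ω, fun t j => by
      rw [hupd, Fintype.card_fin, mul_assoc, Real.rpow_eq_pow, Real.rpow_eq_pow,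
        Real.rpow_mul_one_sub_rpow (by linarith) hβ1, hδ]⟩
  have : Nonempty (Fin m) := ⟨⟨0, by omega⟩⟩
  have hexpected := IsFixedShare.integral_regret_le (Pr := Pr) hfs (fun t j => hRmeas (t, j))
    (fun t k ω => (hR (t, k) ω).1) (fun t k ω => (hR (t, k) ω).2) (by linarith) hμ0 hμ hδ0.le hδ1
    ⟨0, by omega⟩ T
  simp only [integral_eq_of_eq_zero_or_eq_one (hRmeas _) (hRval _) (hη0 _) (hRbern _), sum_const,
    card_range, nsmul_eq_mul, Fintype.card_fin, ← hP] at hexpected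
  have hreindex : ∑ t ∈ Icc 1 T, ∑ j, ∫ ω, P (t - 1) j ω * R (t, j) ω ∂Pr =
      ∑ t ∈ range T, ∑ j, ∫ ω, P t j ω * R (t + 1, j) ω ∂Pr := by
    rw [← Ico_add_one_right_eq_Icc, sum_Ico_eq_sum_range]
    simp [add_comm 1]
  rw [hreindex]
  have hTpos : (0 : ℝ) < T :=
    lt_of_lt_of_le (div_pos (Real.log_pos (by exact_mod_cast hm)) (by positivity)) hT
  exact sub_one_div_mul_le_of_mul_sub_le hδ0 hTpos hT hexpected
end
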